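/- arXiv:2407.19480 — 7 statements merged into one kernel-verified Lean document; each statement's English description precedes it below -/
import Mathlib

section
/- Let U ⊂ ℝ^m be a convex compact set and let F : ℝ^m → ℂ^N be continuously differentiable. Assume F restricted to U is injective and that the Fréchet derivative DF(θ) is injective (as a linear map) for every θ ∈ U. Then there exists a constant C > 0 such that for all θ, θ' ∈ U, ‖θ - θ'‖ ≤ C · ‖F(θ) - F(θ')‖. -/
/-!
Near a point of `U` the map `F` is close to its injective derivative, hence anti-Lipschitz on a
neighbourhood. Away from the diagonal of `U × U`, injectivity and continuity bound
`‖F θ - F θ'‖` below relative to `‖θ - θ'‖`. Compactness of `U × U` glues these local bounds.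
-/

open Set Topology NNReal Function

theorem HasStrictFDerivAt.exists_antilipschitzWith_domRestrict {𝕜 E F : Type*}
    [NontriviallyNormedField 𝕜] [CompleteSpace 𝕜] [NormedAddCommGroup E] [NormedSpace 𝕜 E]
    [FiniteDimensional 𝕜 E] [NormedAddCommGroup F] [NormedSpace 𝕜 F]
    {f : E → F} {f' : E →L[𝕜] F} {x : E} (hf : HasStrictFDerivAt f f' x) (hf' : Injective f') :
    ∃ s ∈ 𝓝 x, ∃ C, AntilipschitzWith C (s.domRestrict f) := by
  obtain ⟨K, hK, hanti⟩ := (f' : E →ₗ[𝕜] F).exists_antilipschitzWith (LinearMap.ker_eq_bot.2 hf')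
  obtain ⟨s, hs, happrox⟩ := hf.approximates_deriv_on_nhds (c := K⁻¹ / 2) (.inr (by positivity))
  have hsplit : s.domRestrict f = fun y ↦ s.domRestrict f' y + (f y - f' y) := by
    funext y
    simp [domRestrict]
  refine ⟨s, hs, (K⁻¹ - K⁻¹ / 2)⁻¹, ?_⟩
  rw [hsplit]
  exact (hanti.domRestrict s).add_lipschitzWith happrox.lipschitz_sub (half_lt_self (inv_pos.2 hK))

theorem IsCompact.exists_antilipschitzWith_domRestrict {X Y : Type*} [MetricSpace X]
    [MetricSpace Y] {f : X → Y} {K : Set X} (hK : IsCompact K) (hf : ContinuousOn f K)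
    (hinj : InjOn f K)
    (hloc : ∀ x ∈ K, ∃ s ∈ 𝓝[K] x, ∃ C, AntilipschitzWith C (s.domRestrict f)) :
    ∃ C, AntilipschitzWith C (K.domRestrict f) := by
  let P (S : Set (X × X)) : Prop := ∃ C : ℝ≥0, ∀ p ∈ S, dist p.1 p.2 ≤ C * dist (f p.1) (f p.2)
  have hP : P (K ×ˢ K) := by
    refine (hK.prod hK).induction_on ⟨0, by simp⟩
      (fun S T hST ⟨C, hC⟩ ↦ ⟨C, fun p hp ↦ hC p (hST hp)⟩)
      (fun S T ⟨C, hC⟩ ⟨D, hD⟩ ↦ ⟨max C D, ?_⟩) ?_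
    · rintro p (hp | hp)
      · exact (hC p hp).trans (by gcongr; exact le_max_left C D)
      · exact (hD p hp).trans (by gcongr; exact le_max_right C D)
    rintro ⟨x, y⟩ ⟨hx, hy⟩
    rcases eq_or_ne x y with rfl | hxy
    · obtain ⟨s, hs, C, hC⟩ := hloc x hx
      refine ⟨s ×ˢ s, ?_, C, fun p hp ↦ hC.le_mul_dist ⟨p.1, hp.1⟩ ⟨p.2, hp.2⟩⟩
      rw [nhdsWithin_prod_eq]
      exact Filter.prod_mem_prod hs hs
    · have hfxy : 0 < dist (f x) (f y) := dist_pos.2 (hinj.ne hx hy hxy)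
      obtain ⟨n, hn⟩ := exists_lt_nsmul hfxy (dist x y)
      have hcont : ContinuousWithinAt (fun p : X × X ↦ (n : ℝ) * dist (f p.1) (f p.2))
          (K ×ˢ K) (x, y) :=
        (((hf x hx).comp continuousWithinAt_fst fun q hq ↦ hq.1).dist
          ((hf y hy).comp continuousWithinAt_snd fun q hq ↦ hq.2)).const_mul _
      exact ⟨_, continuous_dist.continuousWithinAt.eventually_lt hcont (by simpa using hn),
        n, fun p hp ↦ le_of_lt hp⟩
  obtain ⟨C, hC⟩ := hP
  exact ⟨C, .of_le_mul_dist fun a b ↦ hC (a, b) ⟨a.2, b.2⟩⟩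

theorem abstract_stability_general (m N : ℕ) (U : Set (EuclideanSpace ℝ (Fin m)))
    (F : EuclideanSpace ℝ (Fin m) → EuclideanSpace ℂ (Fin N))
    (hUcomp : IsCompact U)
    (hF : ContDiff ℝ 1 F) (hFinj : Set.InjOn F U)
    (hDF : ∀ θ ∈ U, Function.Injective (fderiv ℝ F θ)) :
    ∃ C > 0, ∀ θ ∈ U, ∀ θ' ∈ U, ‖θ - θ'‖ ≤ C * ‖F θ - F θ'‖ := by
  have hloc : ∀ θ ∈ U, ∃ s ∈ 𝓝[U] θ, ∃ C, AntilipschitzWith C (s.domRestrict F) := by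
    intro θ hθ
    have hstrict := hF.contDiffAt.hasStrictFDerivAt (x := θ) one_ne_zero
    obtain ⟨s, hs, hC⟩ := hstrict.exists_antilipschitzWith_domRestrict (hDF θ hθ)
    exact ⟨s, mem_nhdsWithin_of_mem_nhds hs, hC⟩
  obtain ⟨C, hC⟩ := hUcomp.exists_antilipschitzWith_domRestrict hF.continuous.continuousOn hFinj hloc
  refine ⟨C + 1, by positivity, fun θ hθ θ' hθ' ↦ ?_⟩
  calc ‖θ - θ'‖ ≤ C * ‖F θ - F θ'‖ := by
        simpa [Subtype.dist_eq, dist_eq_norm] using hC.le_mul_dist ⟨θ, hθ⟩ ⟨θ', hθ'⟩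
    _ ≤ (C + 1) * ‖F θ - F θ'‖ := by gcongr; linarith

theorem abstract_stability (m N : ℕ) (U : Set (EuclideanSpace ℝ (Fin m)))
    (F : EuclideanSpace ℝ (Fin m) → EuclideanSpace ℂ (Fin N))
    (hUconv : Convex ℝ U) (hUcomp : IsCompact U)
    (hF : ContDiff ℝ 1 F) (hFinj : Set.InjOn F U)
    (hDF : ∀ θ ∈ U, Function.Injective (fderiv ℝ F θ)) :
    ∃ C > 0, ∀ θ ∈ U, ∀ θ' ∈ U, ‖θ - θ'‖ ≤ C * ‖F θ - F θ'‖ :=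
  abstract_stability_general m N U F hUcomp hF hFinj hDF
end

section
/- Let U ⊂ ℝ^m be a convex compact set, F : ℝ^m → ℂ^N continuously differentiable with F|_U injective and DF(θ) injective for all θ ∈ U, and let G : ℝ^m → ℂ^M be continuously differentiable with ‖DG(θ)‖_op ≤ C' for all θ ∈ U. Then there exists C'' > 0 such that for all θ, θ' ∈ U, ‖G(θ) - G(θ')‖ ≤ C'' · ‖F(θ) - F(θ')‖. -/
/-!
By the mean value inequality on the convex set `U`, `G` is Lipschitz there, so it suffices to
bound `‖θ - θ'‖` by a multiple of `‖F θ - F θ'‖` on `U`. Near the diagonal this comes from the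
injectivity of `DF(θ)` (an injective linear map on a finite-dimensional space is
antilipschitz, and a strict derivative makes `F` close to it); away from the diagonal it is the
continuity of `dist θ θ' / dist (F θ) (F θ')`, whose denominator vanishes nowhere by injectivity
of `F` on `U`. Compactness of `U × U` turns these local bounds into a global one.
-/

open Filter Topology Set
open scoped NNReal

theorem IsCompact.eventually_forall_of_forall_eventually_prod {X Y : Type*} [TopologicalSpace Y]
    {K : Set Y} (hK : IsCompact K) {l : Filter X} {P : X → Y → Prop}
    (hP : ∀ y ∈ K, ∀ᶠ z in l ×ˢ 𝓝 y, P z.1 z.2) : ∀ᶠ x in l, ∀ y ∈ K, P x y :=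
  have hprod : ∀ᶠ z in l ×ˢ 𝓝ˢ K, P z.1 z.2 := hK.mem_prod_nhdsSet_of_forall hP
  hprod.curry.mono fun _ h ↦ h.self_of_nhdsSet

section

variable {X Y : Type*} [PseudoMetricSpace X] [MetricSpace Y] {f : X → Y}

theorem exists_eventually_dist_le_mul_dist_of_ne (hf : Continuous f) {a b : X} (hab : f a ≠ f b) :
    ∃ C, ∀ᶠ p in 𝓝 (a, b), dist p.1 p.2 ≤ C * dist (f p.1) (f p.2) := by
  have hfab : 0 < dist (f a) (f b) := dist_pos.2 hab
  have hdist : Continuous fun p : X × X ↦ dist (f p.1) (f p.2) := by fun_prop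
  have hpos : ∀ᶠ p in 𝓝 (a, b), 0 < dist (f p.1) (f p.2) :=
    hdist.continuousAt.eventually (lt_mem_nhds hfab)
  have hratio : ContinuousAt (fun p : X × X ↦ dist p.1 p.2 / dist (f p.1) (f p.2)) (a, b) :=
    continuous_dist.continuousAt.div hdist.continuousAt hfab.ne'
  refine ⟨dist a b / dist (f a) (f b) + 1, ?_⟩
  filter_upwards [hpos, hratio.eventually (gt_mem_nhds (lt_add_one _))] with p hp hlt
  exact ((div_lt_iff₀ hp).1 hlt).le

theorem exists_pos_forall_dist_le_mul_dist {K : Set X} (hK : IsCompact K) (hf : Continuous f)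
    (hinj : InjOn f K)
    (hloc : ∀ a ∈ K, ∃ C, ∀ᶠ p in 𝓝 (a, a), dist p.1 p.2 ≤ C * dist (f p.1) (f p.2)) :
    ∃ C > 0, ∀ x ∈ K, ∀ y ∈ K, dist x y ≤ C * dist (f x) (f y) := by
  have hlocal : ∀ q ∈ K ×ˢ K, ∃ C, ∀ᶠ p in 𝓝 q, dist p.1 p.2 ≤ C * dist (f p.1) (f p.2) := by
    rintro ⟨a, b⟩ ⟨ha, hb⟩
    obtain rfl | hab := eq_or_ne a b
    · exact hloc a ha
    · exact exists_eventually_dist_le_mul_dist_of_ne hf (hinj.ne ha hb hab)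
  have hbound : ∀ᶠ C in atTop, ∀ q ∈ K ×ˢ K, dist q.1 q.2 ≤ C * dist (f q.1) (f q.2) := by
    refine (hK.prod hK).eventually_forall_of_forall_eventually_prod fun q hq ↦ ?_
    obtain ⟨C₀, hC₀⟩ := hlocal q hq
    filter_upwards [(eventually_ge_atTop C₀).prod_mk hC₀] with ⟨C, p⟩ ⟨hC, hp⟩
    exact hp.trans (mul_le_mul_of_nonneg_right hC dist_nonneg)
  obtain ⟨C, hC, hCpos⟩ := (hbound.and (eventually_gt_atTop 0)).exists
  exact ⟨C, hCpos, fun x hx y hy ↦ hC (x, y) ⟨hx, hy⟩⟩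

end

theorem HasStrictFDerivAt.eventually_dist_le_mul_dist {𝕜 E F : Type*} [NontriviallyNormedField 𝕜]
    [NormedAddCommGroup E] [NormedSpace 𝕜 E] [NormedAddCommGroup F] [NormedSpace 𝕜 F]
    {f : E → F} {f' : E →L[𝕜] F} {a : E} {K : ℝ≥0} (hf : HasStrictFDerivAt f f' a)
    (hK : AntilipschitzWith K f') :
    ∀ᶠ p in 𝓝 (a, a), dist p.1 p.2 ≤ 2 * K * dist (f p.1) (f p.2) := by
  -- the linearization error, at most `K * c * ‖p.1 - p.2‖ ≤ ‖p.1 - p.2‖ / 2`, is absorbed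
  have hc : (0 : ℝ) < (2 * (K : ℝ) + 1)⁻¹ := by positivity
  filter_upwards [hf.isLittleO.def hc] with p hp
  set d := f p.1 - f p.2
  have hlin : ‖p.1 - p.2‖ ≤ K * ‖f' (p.1 - p.2)‖ := by
    simpa only [dist_eq_norm, map_sub] using hK.le_mul_dist p.1 p.2
  have htri : ‖f' (p.1 - p.2)‖ ≤ ‖d‖ + ‖d - f' (p.1 - p.2)‖ := by
    simpa only [norm_sub_rev d] using norm_le_norm_add_norm_sub' (f' (p.1 - p.2)) d
  have hKc : (K : ℝ) * (2 * (K : ℝ) + 1)⁻¹ ≤ 1 / 2 := by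
    rw [← div_eq_mul_inv, div_le_iff₀ (by positivity)]; linarith
  rw [dist_eq_norm, dist_eq_norm]
  nlinarith [norm_nonneg (p.1 - p.2), K.coe_nonneg]

theorem abstract_stability_high_res (m N M : ℕ) (U : Set (EuclideanSpace ℝ (Fin m)))
    (F : EuclideanSpace ℝ (Fin m) → EuclideanSpace ℂ (Fin N))
    (G : EuclideanSpace ℝ (Fin m) → EuclideanSpace ℂ (Fin M))
    (C' : ℝ)
    (hUconv : Convex ℝ U) (hUcomp : IsCompact U)
    (hF : ContDiff ℝ 1 F) (hFinj : Set.InjOn F U)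
    (hDF : ∀ θ ∈ U, Function.Injective (fderiv ℝ F θ))
    (hG : ContDiff ℝ 1 G)
    (hDG : ∀ θ ∈ U, ‖fderiv ℝ G θ‖ ≤ C') :
    ∃ C'' > 0, ∀ θ ∈ U, ∀ θ' ∈ U, ‖G θ - G θ'‖ ≤ C'' * ‖F θ - F θ'‖ := by
  have hFloc : ∀ θ ∈ U, ∃ C, ∀ᶠ p in 𝓝 (θ, θ), dist p.1 p.2 ≤ C * dist (F p.1) (F p.2) := by
    intro θ hθ
    obtain ⟨K, -, hK⟩ := ((fderiv ℝ F θ).toLinearMap.injective_iff_antilipschitz).1 (hDF θ hθ)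
    exact ⟨_, (hF.contDiffAt.hasStrictFDerivAt one_ne_zero).eventually_dist_le_mul_dist hK⟩
  obtain ⟨C, hC, hFinv⟩ := exists_pos_forall_dist_le_mul_dist hUcomp hF.continuous hFinj hFloc
  refine ⟨max C' 1 * C, by positivity, fun θ hθ θ' hθ' ↦ ?_⟩
  calc ‖G θ - G θ'‖ ≤ max C' 1 * ‖θ - θ'‖ :=
        hUconv.norm_image_sub_le_of_norm_fderiv_le (fun _ _ ↦ hG.differentiable one_ne_zero _)
          (fun x hx ↦ (hDG x hx).trans (le_max_left _ _)) hθ' hθ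
    _ ≤ max C' 1 * (C * ‖F θ - F θ'‖) := by
      gcongr
      simpa only [dist_eq_norm] using hFinv θ hθ θ' hθ'
    _ = max C' 1 * C * ‖F θ - F θ'‖ := by ring
end

section
/- Let θ_1,…,θ_n ∈ [0,1) be pairwise distinct and θ'_1,…,θ'_n ∈ [0,1) be pairwise distinct, let a_1,…,a_n and a'_1,…,a'_n be nonzero complex numbers, and let K ≥ n. If Σ_{j=1}^n a_j e^{-2πi θ_j k} = Σ_{j=1}^n a'_j e^{-2πi θ'_j k} for all integers k with |k| ≤ K, then the sets of pairs {(θ_j, a_j)} and {(θ'_j, a'_j)} coincide. -/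
open scoped Real

open Finset Matrix in
private lemma vand_zero {m : ℕ} (w : Fin m → ℂ) (hw : Function.Injective w)
    (c : Fin m → ℂ) (h : ∀ i : Fin m, ∑ j, c j * w j ^ (i : ℕ) = 0) :
    ∀ j, c j = 0 := by
  set M : Matrix (Fin m) (Fin m) ℂ := (Matrix.vandermonde w)ᵀ with hM
  have hdet : M.det ≠ 0 := by
    rw [hM, Matrix.det_transpose, Matrix.det_vandermonde]
    apply Finset.prod_ne_zero_iff.mpr
    intro i _
    apply Finset.prod_ne_zero_iff.mpr
    intro j hj
    have : i ≠ j := by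
      intro hij; subst hij; exact absurd (Finset.mem_Ioi.mp hj) (lt_irrefl i)
    exact sub_ne_zero.mpr fun he => this (hw he.symm)
  have hMc : M.mulVec c = 0 := by
    funext i
    have := h i
    simpa [Matrix.mulVec, dotProduct, hM, Matrix.vandermonde, mul_comm] using this
  have hu : IsUnit M.det := isUnit_iff_ne_zero.mpr hdet
  have h1 : M⁻¹ * M = 1 := Matrix.nonsing_inv_mul M hu
  have : c = 0 := by
    calc c = (1 : Matrix (Fin m) (Fin m) ℂ).mulVec c := (Matrix.one_mulVec c).symm
    _ = (M⁻¹ * M).mulVec c := by rw [h1]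
    _ = M⁻¹.mulVec (M.mulVec c) := (Matrix.mulVec_mulVec _ _ _).symm
    _ = M⁻¹.mulVec 0 := by rw [hMc]
    _ = 0 := Matrix.mulVec_zero _
  intro j; exact congrFun this j

open Finset in
private lemma finset_vand_zero (s : Finset ℂ) (c : ℂ → ℂ)
    (h : ∀ m : ℕ, m < s.card → ∑ ζ ∈ s, c ζ * ζ ^ m = 0) :
    ∀ ζ ∈ s, c ζ = 0 := by
  intro ζ hζ
  let e : {x // x ∈ s} ≃ Fin s.card := s.equivFin
  set w : Fin s.card → ℂ := fun i => ((e.symm i : {x // x ∈ s}) : ℂ) with hw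
  have hwinj : Function.Injective w := by
    intro i j hij
    exact e.symm.injective (Subtype.ext hij)
  have hsum : ∀ i : Fin s.card, ∑ j, (c ∘ w) j * w j ^ (i : ℕ) = 0 := by
    intro i
    have : ∑ j, (c ∘ w) j * w j ^ (i : ℕ)
        = ∑ x : {x // x ∈ s}, c (x : ℂ) * (x : ℂ) ^ (i : ℕ) := by
      exact Equiv.sum_comp e.symm (fun x => c (x : ℂ) * (x : ℂ) ^ (i : ℕ))
    rw [this, Finset.sum_coe_sort s (fun x => c x * x ^ (i : ℕ))]
    exact h i i.isLt
  have := vand_zero w hwinj (c ∘ w) hsum (e ⟨ζ, hζ⟩)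
  simpa [hw] using this

private lemma theta_inj {x y : ℝ} (hx : x ∈ Set.Ico (0 : ℝ) 1)
    (hy : y ∈ Set.Ico (0 : ℝ) 1)
    (h : Complex.exp (-(2 * π * Complex.I) * x) = Complex.exp (-(2 * π * Complex.I) * y)) :
    x = y := by
  rw [Complex.exp_eq_exp_iff_exists_int] at h
  obtain ⟨m, hm⟩ := h
  have hI : (2 * π * Complex.I) ≠ 0 := by
    simp [Complex.I_ne_zero, Real.pi_ne_zero]
  have key : (y : ℂ) - x = m := by
    have h2 : (2 * π * Complex.I) * ((y : ℂ) - x) = (2 * π * Complex.I) * m := by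
      linear_combination hm
    exact mul_left_cancel₀ hI h2
  have keyr : y - x = (m : ℝ) := by
    have := congrArg Complex.re key
    push_cast at this
    simpa using this
  have h1 : -1 < (m : ℝ) := by rw [← keyr]; nlinarith [hx.1, hx.2, hy.1, hy.2]
  have h2 : (m : ℝ) < 1 := by rw [← keyr]; nlinarith [hx.1, hx.2, hy.1, hy.2]
  have hA : (-1 : ℤ) < m := by exact_mod_cast h1
  have hB : m < 1 := by exact_mod_cast h2
  have hm0 : m = 0 := by omega
  rw [hm0] at keyr
  simp at keyr
  linarith

open Finset in
private lemma subset_aux (n : ℕ) (K : ℤ) (θ θ' : Fin n → ℝ)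
    (a a' : Fin n → ℂ)
    (hrange : ∀ j, θ j ∈ Set.Ico (0 : ℝ) 1)
    (hrange' : ∀ j, θ' j ∈ Set.Ico (0 : ℝ) 1)
    (hdist : Function.Injective θ) (hdist' : Function.Injective θ')
    (ha : ∀ j, a j ≠ 0)
    (hK : (n : ℤ) ≤ K)
    (heq : ∀ k : ℤ, |k| ≤ K →
      ∑ j, a j * Complex.exp (-(2 * π * Complex.I) * (θ j) * (k : ℂ)) =
      ∑ j, a' j * Complex.exp (-(2 * π * Complex.I) * (θ' j) * (k : ℂ))) :
    Set.range (fun j => (θ j, a j)) ⊆ Set.range (fun j => (θ' j, a' j)) := by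
  set z : Fin n → ℂ := fun j => Complex.exp (-(2 * π * Complex.I) * (θ j)) with hz
  set z' : Fin n → ℂ := fun j => Complex.exp (-(2 * π * Complex.I) * (θ' j)) with hz'
  have hzpow : ∀ (j : Fin n) (k : ℤ),
      Complex.exp (-(2 * π * Complex.I) * (θ j) * (k : ℂ)) = z j ^ k := by
    intro j k
    rw [hz]
    rw [← Complex.exp_int_mul]
    ring_nf
  have hzpow' : ∀ (j : Fin n) (k : ℤ),
      Complex.exp (-(2 * π * Complex.I) * (θ' j) * (k : ℂ)) = z' j ^ k := by
    intro j k
    rw [hz']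
    rw [← Complex.exp_int_mul]
    ring_nf
  have hzne : ∀ j, z j ≠ 0 := fun j => Complex.exp_ne_zero _
  have hzne' : ∀ j, z' j ≠ 0 := fun j => Complex.exp_ne_zero _
  have hzinj : Function.Injective z :=
    fun i j hij => hdist (theta_inj (hrange i) (hrange j) hij)
  have hzinj' : Function.Injective z' :=
    fun i j hij => hdist' (theta_inj (hrange' i) (hrange' j) hij)
  set s : Finset ℂ := (univ.image z) ∪ (univ.image z') with hs
  set f : ℂ → ℂ := fun ζ =>
    (∑ j ∈ univ.filter (fun j => z j = ζ), a j)
      - (∑ j ∈ univ.filter (fun j => z' j = ζ), a' j) with hf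
  have hcard : (s.card : ℤ) ≤ 2 * n := by
    have h1 : s.card ≤ (univ.image z).card + (univ.image z').card := by
      rw [hs]; exact Finset.card_union_le _ _
    have h2 := Finset.card_image_le (s := (univ : Finset (Fin n))) (f := z)
    have h3 := Finset.card_image_le (s := (univ : Finset (Fin n))) (f := z')
    simp only [Finset.card_univ, Fintype.card_fin] at h2 h3
    push_cast
    omega
  have hsne : ∀ ζ ∈ s, ζ ≠ 0 := by
    intro ζ hζ
    rw [hs, Finset.mem_union] at hζ
    rcases hζ with h | h <;>
      · obtain ⟨j, _, rfl⟩ := Finset.mem_image.mp h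
        first
          | exact hzne j
          | exact hzne' j
  have hkey : ∀ k : ℤ, |k| ≤ K → ∑ ζ ∈ s, f ζ * ζ ^ k = 0 := by
    intro k hk
    have e1 : ∑ ζ ∈ s, (∑ j ∈ univ.filter (fun j => z j = ζ), a j) * ζ ^ k
        = ∑ j, a j * z j ^ k := by
      rw [← Finset.sum_fiberwise_of_maps_to (g := z) (t := s)
        (fun j _ => Finset.mem_union_left _ (Finset.mem_image_of_mem z (mem_univ j)))
        (fun j => a j * z j ^ k)]
      refine Finset.sum_congr rfl fun ζ _ => ?_
      rw [Finset.sum_mul]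
      refine Finset.sum_congr rfl fun j hj => ?_
      rw [(Finset.mem_filter.mp hj).2]
    have e2 : ∑ ζ ∈ s, (∑ j ∈ univ.filter (fun j => z' j = ζ), a' j) * ζ ^ k
        = ∑ j, a' j * z' j ^ k := by
      rw [← Finset.sum_fiberwise_of_maps_to (g := z') (t := s)
        (fun j _ => Finset.mem_union_right _ (Finset.mem_image_of_mem z' (mem_univ j)))
        (fun j => a' j * z' j ^ k)]
      refine Finset.sum_congr rfl fun ζ _ => ?_
      rw [Finset.sum_mul]
      refine Finset.sum_congr rfl fun j hj => ?_
      rw [(Finset.mem_filter.mp hj).2]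
    have : ∑ ζ ∈ s, f ζ * ζ ^ k
        = ∑ j, a j * z j ^ k - ∑ j, a' j * z' j ^ k := by
      rw [← e1, ← e2, ← Finset.sum_sub_distrib]
      refine Finset.sum_congr rfl fun ζ _ => ?_
      rw [hf]; ring
    rw [this]
    have := heq k hk
    simp only [hzpow, hzpow'] at this
    rw [this]; ring
  have hf0 : ∀ ζ ∈ s, f ζ = 0 := by
    intro ζ hζ
    have := finset_vand_zero s (fun ζ => f ζ * ζ ^ (-K)) ?_ ζ hζ
    · have hK0 : ζ ^ (-K) ≠ 0 := zpow_ne_zero _ (hsne ζ hζ)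
      exact (mul_eq_zero.mp this).resolve_right hK0
    · intro m hm
      have : ∀ ξ ∈ s, f ξ * ξ ^ (-K) * ξ ^ m = f ξ * ξ ^ ((m : ℤ) - K) := by
        intro ξ hξ
        rw [mul_assoc, ← zpow_natCast ξ m, ← zpow_add₀ (hsne ξ hξ)]
        ring_nf
      rw [Finset.sum_congr rfl this]
      apply hkey
      rw [abs_le]
      constructor
      · have : (0 : ℤ) ≤ m := Int.natCast_nonneg m
        omega
      · have hmc : (m : ℤ) < s.card := by exact_mod_cast hm
        omega
  rintro ⟨x, y⟩ ⟨j0, hj0⟩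
  simp only [Prod.mk.injEq] at hj0
  obtain ⟨hx, hy⟩ := hj0
  have hmem : z j0 ∈ s := Finset.mem_union_left _ (Finset.mem_image_of_mem z (mem_univ j0))
  have hf00 := hf0 (z j0) hmem
  simp only [hf] at hf00
  have hfib : univ.filter (fun j => z j = z j0) = {j0} := by
    ext j
    simp only [Finset.mem_filter, Finset.mem_singleton, mem_univ, true_and]
    exact ⟨fun h => hzinj h, fun h => by rw [h]⟩
  rw [hfib, Finset.sum_singleton] at hf00
  set t := univ.filter (fun j => z' j = z j0) with ht
  rcases Finset.eq_empty_or_nonempty t with hemp | ⟨j1, hj1⟩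
  · rw [hemp] at hf00
    simp at hf00
    exact absurd hf00 (ha j0)
  · have hj1' : z' j1 = z j0 := (Finset.mem_filter.mp hj1).2
    have hfib' : t = {j1} := by
      ext j
      rw [ht]
      simp only [Finset.mem_filter, Finset.mem_singleton, mem_univ, true_and]
      refine ⟨fun h => hzinj' (h.trans hj1'.symm), fun h => by rw [h]; exact hj1'⟩
    rw [hfib', Finset.sum_singleton] at hf00
    have haeq : a j0 = a' j1 := by linear_combination hf00
    have hteq : θ j0 = θ' j1 := theta_inj (hrange j0) (hrange' j1) hj1'.symm
    exact ⟨j1, by simp only [Prod.ext_iff]; exact ⟨hteq ▸ hx, haeq ▸ hy⟩⟩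

theorem point_source_uniqueness (n : ℕ) (K : ℤ) (θ θ' : Fin n → ℝ)
    (a a' : Fin n → ℂ)
    (hrange : ∀ j, θ j ∈ Set.Ico (0 : ℝ) 1)
    (hrange' : ∀ j, θ' j ∈ Set.Ico (0 : ℝ) 1)
    (hdist : Function.Injective θ) (hdist' : Function.Injective θ')
    (ha : ∀ j, a j ≠ 0) (ha' : ∀ j, a' j ≠ 0)
    (hK : (n : ℤ) ≤ K)
    (heq : ∀ k : ℤ, |k| ≤ K →
      ∑ j, a j * Complex.exp (-(2 * π * Complex.I) * (θ j) * (k : ℂ)) =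
      ∑ j, a' j * Complex.exp (-(2 * π * Complex.I) * (θ' j) * (k : ℂ))) :
    Set.range (fun j => (θ j, a j)) = Set.range (fun j => (θ' j, a' j)) := by
  apply Set.Subset.antisymm
  · exact subset_aux n K θ θ' a a' hrange hrange' hdist hdist' ha hK heq
  · exact subset_aux n K θ' θ a' a hrange' hrange hdist' hdist ha' hK (fun k hk => (heq k hk).symm)
end

section
/- Let θ_1,…,θ_n ∈ [0,1) be pairwise distinct and a_1,…,a_n nonzero real numbers, and let K ≥ n. Then the (2K+1) × 2n confluent Vandermonde matrix M with columns (e^{-2πi θ_j k})_{k=-K}^{K} for j=1,…,n and (-2πi a_j k e^{-2πi θ_j k})_{k=-K}^{K} for j=1,…,n has full column rank 2n. -/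
open scoped Real
open Polynomial Finset

private lemma cv_shift_eval {N : ℕ} (p : Polynomial ℂ) (hp : p.natDegree < N) (z : ℂ) :
    z * (Polynomial.derivative p).eval z
      = ∑ k ∈ Finset.range N, p.coeff k * k * z ^ k := by
  obtain ⟨M, rfl⟩ : ∃ M, N = M + 1 := ⟨N - 1, by omega⟩
  have hd : (Polynomial.derivative p).natDegree < M + 1 :=
    lt_of_le_of_lt (Polynomial.natDegree_derivative_le p) (by omega)
  have hcoeff : p.coeff (M + 1) = 0 :=
    Polynomial.coeff_eq_zero_of_natDegree_lt hp
  rw [Polynomial.eval_eq_sum_range' hd z, Finset.mul_sum]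
  rw [Finset.sum_range_succ, Polynomial.coeff_derivative, hcoeff]
  rw [Finset.sum_range_succ']
  simp only [Polynomial.coeff_derivative]
  rw [show (p.coeff 0 * (0:ℕ) * z ^ (0:ℕ)) = 0 by push_cast; ring]
  rw [show (z * ((0:ℂ) * ((M:ℂ) + 1) * z ^ M)) = 0 by ring]
  rw [add_zero, add_zero]
  refine Finset.sum_congr rfl fun i _ => ?_
  push_cast
  ring

private lemma cv_key {n N : ℕ} (z Cc Dc : Fin n → ℂ)
    (h : ∀ k < N, ∑ j, (Cc j * z j ^ k + Dc j * k * z j ^ k) = 0)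
    (p : Polynomial ℂ) (hp : p.natDegree < N) :
    ∑ j, (Cc j * p.eval (z j)
      + Dc j * (z j * (Polynomial.derivative p).eval (z j))) = 0 := by
  calc ∑ j, (Cc j * p.eval (z j) + Dc j * (z j * (Polynomial.derivative p).eval (z j)))
      = ∑ j, ∑ k ∈ Finset.range N,
          p.coeff k * (Cc j * z j ^ k + Dc j * k * z j ^ k) := by
        refine Finset.sum_congr rfl fun j _ => ?_
        rw [Polynomial.eval_eq_sum_range' hp (z j), cv_shift_eval p hp (z j),
          Finset.mul_sum, Finset.mul_sum, ← Finset.sum_add_distrib]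
        exact Finset.sum_congr rfl fun k _ => by ring
    _ = ∑ k ∈ Finset.range N,
          p.coeff k * ∑ j, (Cc j * z j ^ k + Dc j * k * z j ^ k) := by
        rw [Finset.sum_comm]
        exact Finset.sum_congr rfl fun k _ => by rw [Finset.mul_sum]
    _ = 0 := Finset.sum_eq_zero fun k hk => by
        rw [h k (Finset.mem_range.mp hk), mul_zero]

theorem confluent_vandermonde_full_rank (n K : ℕ) (θ : Fin n → ℝ) (a : Fin n → ℝ)
    (hrange : ∀ j, θ j ∈ Set.Ico (0 : ℝ) 1)
    (hdist : Function.Injective θ)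
    (ha : ∀ j, a j ≠ 0) (hK : n ≤ K) :
    LinearIndependent ℂ (Sum.elim
      (fun j : Fin n => fun k : Fin (2 * K + 1) =>
        Complex.exp (-(2 * π * Complex.I) * (θ j) * (((k : ℕ) : ℂ) - (K : ℂ))))
      (fun j : Fin n => fun k : Fin (2 * K + 1) =>
        -(2 * π * Complex.I) * (a j : ℂ) * (((k : ℕ) : ℂ) - (K : ℂ)) *
          Complex.exp (-(2 * π * Complex.I) * (θ j) * (((k : ℕ) : ℂ) - (K : ℂ))))) := by
  rw [Fintype.linearIndependent_iff]
  intro g hg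
  set w : ℂ := -(2 * (π : ℂ) * Complex.I) with hw
  have hπ : ((π : ℝ) : ℂ) ≠ 0 := Complex.ofReal_ne_zero.mpr Real.pi_ne_zero
  have h2πI : (2 * (π : ℂ) * Complex.I) ≠ 0 :=
    mul_ne_zero (mul_ne_zero two_ne_zero hπ) Complex.I_ne_zero
  have hw0 : w ≠ 0 := neg_ne_zero.mpr h2πI
  set z : Fin n → ℂ := fun j => Complex.exp (w * θ j) with hz
  have hz0 : ∀ j, z j ≠ 0 := fun j => Complex.exp_ne_zero _
  -- injectivity of z
  have hzinj : ∀ i j, z i = z j → i = j := by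
    intro i j hij
    rcases Complex.exp_eq_exp_iff_exists_int.mp hij with ⟨m, hm⟩
    have h3 : (2 * (π : ℂ) * Complex.I) * (-(θ i)) =
        (2 * (π : ℂ) * Complex.I) * (-(θ j) + m) := by
      rw [hw] at hm
      linear_combination hm
    have h4 : (-(θ i : ℂ)) = -(θ j) + m := mul_left_cancel₀ h2πI h3
    have h5 : -(θ i) = -(θ j) + (m : ℝ) := by exact_mod_cast h4
    obtain ⟨hi0, hi1⟩ := hrange i
    obtain ⟨hj0, hj1⟩ := hrange j
    have hm0 : m = 0 := by
      have h6r : ((-1 : ℝ)) < m := by linarith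
      have h7r : ((m : ℝ)) < 1 := by linarith
      have h6 : (-1 : ℤ) < m := by exact_mod_cast h6r
      have h7 : m < (1 : ℤ) := by exact_mod_cast h7r
      omega
    exact hdist (by rw [hm0] at h5; push_cast at h5; linarith)
  -- exponent identity
  have hexp : ∀ (j : Fin n) (k : ℕ),
      Complex.exp (w * θ j * ((k : ℂ) - K)) = z j ^ k * (z j ^ K)⁻¹ := by
    intro j k
    have h1 : w * θ j * ((k : ℂ) - K) = (((k : ℤ) - K : ℤ) : ℂ) * (w * θ j) := by
      push_cast; ring
    rw [h1, Complex.exp_int_mul, zpow_sub₀ (hz0 j)]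
    rw [zpow_natCast, zpow_natCast, div_eq_mul_inv]
  -- reduced coefficients
  set Dc : Fin n → ℂ := fun j => g (Sum.inr j) * (w * a j) * (z j ^ K)⁻¹ with hDc
  set Cc : Fin n → ℂ :=
    fun j => (g (Sum.inl j) - (K : ℂ) * (w * a j) * g (Sum.inr j)) * (z j ^ K)⁻¹ with hCc
  -- the linear relation
  have h : ∀ k < 2 * K + 1, ∑ j, (Cc j * z j ^ k + Dc j * k * z j ^ k) = 0 := by
    intro k hk
    have h1 := congrFun hg ⟨k, hk⟩
    simp only [Finset.sum_apply, Pi.smul_apply, Pi.zero_apply, Fintype.sum_sum_type,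
      Sum.elim_inl, Sum.elim_inr, smul_eq_mul] at h1
    calc ∑ j, (Cc j * z j ^ k + Dc j * k * z j ^ k)
        = (∑ j, g (Sum.inl j) * Complex.exp (w * θ j * ((k : ℂ) - K)))
          + ∑ j, g (Sum.inr j) * (w * a j * ((k : ℂ) - K)
              * Complex.exp (w * θ j * ((k : ℂ) - K))) := by
          rw [← Finset.sum_add_distrib]
          refine Finset.sum_congr rfl fun j _ => ?_
          rw [hexp j k, hCc, hDc]
          ring
      _ = 0 := by rw [← h1]
  -- interpolation polynomials
  set R : Fin n → Polynomial ℂ :=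
    fun j => ∏ i ∈ Finset.univ.erase j, (X - C (z i)) with hR
  have hRdeg : ∀ j, (R j).natDegree ≤ n - 1 := by
    intro j
    refine le_trans (Polynomial.natDegree_prod_le _ _) (le_of_eq ?_)
    calc ∑ i ∈ Finset.univ.erase j, (X - C (z i)).natDegree
        = ∑ i ∈ Finset.univ.erase j, 1 := by
          exact Finset.sum_congr rfl fun i _ => Polynomial.natDegree_X_sub_C _
      _ = (Finset.univ.erase j).card := by rw [Finset.sum_const, smul_eq_mul, mul_one]
      _ = n - 1 := by
          rw [Finset.card_erase_of_mem (Finset.mem_univ j), Finset.card_univ,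
            Fintype.card_fin]
  have hReval0 : ∀ j i, i ≠ j → (R j).eval (z i) = 0 := by
    intro j i hij
    rw [hR, Polynomial.eval_prod]
    exact Finset.prod_eq_zero (Finset.mem_erase.mpr ⟨hij, Finset.mem_univ i⟩) (by simp)
  have hReval : ∀ j, (R j).eval (z j) ≠ 0 := by
    intro j
    rw [hR, Polynomial.eval_prod]
    refine Finset.prod_ne_zero_iff.mpr fun i hi => ?_
    simp only [Polynomial.eval_sub, Polynomial.eval_X, Polynomial.eval_C, sub_ne_zero]
    exact fun hc => (Finset.mem_erase.mp hi).1 (hzinj j i hc).symm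
  -- Step 1: Dc = 0
  have hD : ∀ j, Dc j = 0 := by
    intro j
    set p : Polynomial ℂ := (X - C (z j)) * (R j) ^ 2 with hpdef
    have hdeg : p.natDegree < 2 * K + 1 := by
      have h1 : p.natDegree ≤ (X - C (z j)).natDegree + ((R j) ^ 2).natDegree :=
        Polynomial.natDegree_mul_le
      rw [Polynomial.natDegree_X_sub_C, Polynomial.natDegree_pow] at h1
      have h2 := hRdeg j
      have hn : 1 ≤ n := Fin.pos j
      omega
    have hder : Polynomial.derivative p
        = (R j) ^ 2 + (X - C (z j)) * (C (2 : ℂ) * (R j) * Polynomial.derivative (R j)) := by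
      rw [hpdef, Polynomial.derivative_mul, Polynomial.derivative_X_sub_C,
        Polynomial.derivative_pow]
      norm_num
    have hev : ∀ i, p.eval (z i) = (z i - z j) * ((R j).eval (z i)) ^ 2 := by
      intro i; rw [hpdef]; simp
    have hdev : ∀ i, (Polynomial.derivative p).eval (z i)
        = ((R j).eval (z i)) ^ 2
          + (z i - z j) * (2 * (R j).eval (z i) * (Polynomial.derivative (R j)).eval (z i)) := by
      intro i; rw [hder]; simp
    have hsum := cv_key z Cc Dc h p hdeg
    rw [Finset.sum_eq_single j
      (fun i _ hij => by rw [hev, hdev, hReval0 j i hij]; ring)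
      (fun h' => absurd (Finset.mem_univ j) h')] at hsum
    rw [hev, hdev, sub_self] at hsum
    have hsum2 : Dc j * (z j * ((R j).eval (z j)) ^ 2) = 0 := by
      rw [← hsum]; ring
    have hne : z j * ((R j).eval (z j)) ^ 2 ≠ 0 :=
      mul_ne_zero (hz0 j) (pow_ne_zero 2 (hReval j))
    exact (mul_eq_zero.mp hsum2).resolve_right hne
  -- Step 2: Cc = 0
  have hC : ∀ j, Cc j = 0 := by
    intro j
    have hdeg : (R j).natDegree < 2 * K + 1 := lt_of_le_of_lt (hRdeg j) (by omega)
    have hsum := cv_key z Cc Dc h (R j) hdeg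
    simp only [hD, zero_mul, add_zero] at hsum
    rw [Finset.sum_eq_single j
      (fun i _ hij => by rw [hReval0 j i hij, mul_zero])
      (fun h' => absurd (Finset.mem_univ j) h')] at hsum
    exact (mul_eq_zero.mp hsum).resolve_right (hReval j)
  -- conclude
  have hinv : ∀ j, ((z j ^ K)⁻¹ : ℂ) ≠ 0 := fun j => inv_ne_zero (pow_ne_zero _ (hz0 j))
  have hwa : ∀ j, w * (a j : ℂ) ≠ 0 :=
    fun j => mul_ne_zero hw0 (Complex.ofReal_ne_zero.mpr (ha j))
  have hginr : ∀ j, g (Sum.inr j) = 0 := by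
    intro j
    have h1 := hD j
    rw [hDc] at h1
    rcases mul_eq_zero.mp h1 with h2 | h2
    · rcases mul_eq_zero.mp h2 with h3 | h3
      · exact h3
      · exact absurd h3 (hwa j)
    · exact absurd h2 (hinv j)
  have hginl : ∀ j, g (Sum.inl j) = 0 := by
    intro j
    have h1 := hC j
    rw [hCc] at h1
    simp only [hginr, mul_zero, sub_zero] at h1
    exact (mul_eq_zero.mp h1).resolve_right (hinv j)
  intro i
  cases i with
  | inl j => exact hginl j
  | inr j => exact hginr j
end

section
/- Let F : ℝ^m → ℂ^N be twice continuously differentiable, let y ∈ ℂ^N, and define φ(θ) = (1/2)‖F(θ) - y‖². Suppose θ̂ ∈ ℝ^m satisfies: DF(θ̂) is injective with smallest singular value σ_min > 0, ‖F(θ̂) - y‖ < σ, and σ·‖ξ‖ ≤ σ_min², where ξ = (‖∇²F_1(θ̂)‖_op, …, ‖∇²F_N(θ̂)‖_op) (componentwise Hessian operator norms). Then the Hessian ∇²φ(θ̂) is positive definite. -/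
/-!
At θ̂ the second derivative of φ in a direction z is the Gauss–Newton term ‖DF(θ̂) z‖², which is
at least σ_min² ‖z‖², plus the residual term ⟪F(θ̂) - y, D²F(θ̂)[z, z]⟫. Since the k-th coordinate
of D²F(θ̂)[z, z] is ∇²F_k(θ̂)[z, z], we get ‖D²F(θ̂)[z, z]‖ ≤ ‖ξ‖ ‖z‖², so the residual term is
at least -‖F(θ̂) - y‖ ‖ξ‖ ‖z‖², and ‖F(θ̂) - y‖ ‖ξ‖ < σ_min².
-/

open scoped Real InnerProductSpace

section SecondDerivative

variable {E G : Type*} [NormedAddCommGroup E] [NormedSpace ℝ E] [NormedAddCommGroup G]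

theorem hasFDerivAt_half_norm_sub_sq [InnerProductSpace ℝ G] {F : E → G} {x : E}
    (hF : DifferentiableAt ℝ F x) (y : G) :
    HasFDerivAt (fun θ => (1 / 2 : ℝ) * ‖F θ - y‖ ^ 2)
      ((innerSL ℝ (F x - y)).comp (fderiv ℝ F x)) x := by
  refine ((hF.hasFDerivAt.sub_const y).norm_sq.const_mul (1 / 2 : ℝ)).congr_fderiv ?_
  ext w
  simp

theorem fderiv_fderiv_half_norm_sub_sq_apply [InnerProductSpace ℝ G] {F : E → G} {θ : E}
    (hF : ContDiffAt ℝ 2 F θ) (y : G) (z w : E) :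
    fderiv ℝ (fderiv ℝ (fun θ => (1 / 2 : ℝ) * ‖F θ - y‖ ^ 2)) θ z w =
      ⟪fderiv ℝ F θ z, fderiv ℝ F θ w⟫_ℝ + ⟪F θ - y, fderiv ℝ (fderiv ℝ F) θ z w⟫_ℝ := by
  have hderiv : fderiv ℝ (fun θ => (1 / 2 : ℝ) * ‖F θ - y‖ ^ 2) =ᶠ[nhds θ]
      fun x => (innerSL ℝ (F x - y)).comp (fderiv ℝ F x) := by
    filter_upwards [hF.eventually (by simp)] with x hx
    exact (hasFDerivAt_half_norm_sub_sq (hx.differentiableAt (by norm_num)) y).fderiv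
  have hinner : HasFDerivAt (fun x => innerSL ℝ (F x - y))
      ((innerSL ℝ).comp (fderiv ℝ F θ)) θ :=
    (innerSL ℝ).hasFDerivAt.comp θ
      ((hF.differentiableAt (by norm_num)).hasFDerivAt.sub_const y)
  have hD2 : HasFDerivAt (fderiv ℝ F) (fderiv ℝ (fderiv ℝ F) θ) θ :=
    ((hF.fderiv_right (m := 1) (by norm_num)).differentiableAt (by norm_num)).hasFDerivAt
  rw [hderiv.fderiv_eq, (hinner.clm_comp hD2).fderiv]
  simp [inner_sub_left]
  ring

theorem ContinuousLinearMap.fderiv_fderiv_comp_apply {H : Type*} [NormedAddCommGroup H]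
    [NormedSpace ℝ H] [NormedSpace ℝ G] (L : G →L[ℝ] H) {F : E → G} {θ : E}
    (hF : ContDiffAt ℝ 2 F θ) (z w : E) :
    fderiv ℝ (fderiv ℝ (fun x => L (F x))) θ z w = L (fderiv ℝ (fderiv ℝ F) θ z w) := by
  have hderiv : fderiv ℝ (fun x => L (F x)) =ᶠ[nhds θ] fun x => L.comp (fderiv ℝ F x) := by
    filter_upwards [hF.eventually (by simp)] with x hx
    exact (L.hasFDerivAt.comp x (hx.differentiableAt (by norm_num)).hasFDerivAt).fderiv
  have hD2 : HasFDerivAt (fderiv ℝ F) (fderiv ℝ (fderiv ℝ F) θ) θ :=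
    ((hF.fderiv_right (m := 1) (by norm_num)).differentiableAt (by norm_num)).hasFDerivAt
  have hcomp : HasFDerivAt (fun x => L.comp (fderiv ℝ F x))
      ((ContinuousLinearMap.compL ℝ E G H L).comp (fderiv ℝ (fderiv ℝ F) θ)) θ :=
    (ContinuousLinearMap.compL ℝ E G H L).hasFDerivAt.comp θ hD2
  rw [hderiv.fderiv_eq, hcomp.fderiv]
  simp

end SecondDerivative

theorem EuclideanSpace.norm_le_sqrt_sum_sq {𝕜 ι : Type*} [RCLike 𝕜] [Fintype ι]
    {v : EuclideanSpace 𝕜 ι} {c : ι → ℝ} (h : ∀ k, ‖v k‖ ≤ c k) :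
    ‖v‖ ≤ √(∑ k, c k ^ 2) := by
  rw [EuclideanSpace.norm_eq]
  exact Real.sqrt_le_sqrt <| Finset.sum_le_sum fun k _ => pow_le_pow_left₀ (norm_nonneg _) (h k) 2

theorem EuclideanSpace.norm_fderiv_fderiv_apply_le {E 𝕜 ι : Type*} [NormedAddCommGroup E]
    [NormedSpace ℝ E] [RCLike 𝕜] [Fintype ι] {F : E → EuclideanSpace 𝕜 ι} {θ : E}
    (hF : ContDiffAt ℝ 2 F θ) (z w : E) :
    ‖fderiv ℝ (fderiv ℝ F) θ z w‖ ≤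
      √(∑ k, ‖fderiv ℝ (fderiv ℝ (fun x => F x k)) θ‖ ^ 2) * (‖z‖ * ‖w‖) := by
  have hcomponent : ∀ k, ‖fderiv ℝ (fderiv ℝ F) θ z w k‖ ≤
      ‖fderiv ℝ (fderiv ℝ (fun x => F x k)) θ‖ * (‖z‖ * ‖w‖) := fun k => by
    have hk : fderiv ℝ (fderiv ℝ (fun x => F x k)) θ z w = fderiv ℝ (fderiv ℝ F) θ z w k :=
      ((EuclideanSpace.proj k).restrictScalars ℝ).fderiv_fderiv_comp_apply hF z w
    rw [← hk, ← mul_assoc]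
    exact ContinuousLinearMap.le_opNorm₂ _ z w
  calc ‖fderiv ℝ (fderiv ℝ F) θ z w‖
      ≤ √(∑ k, (‖fderiv ℝ (fderiv ℝ (fun x => F x k)) θ‖ * (‖z‖ * ‖w‖)) ^ 2) :=
        EuclideanSpace.norm_le_sqrt_sum_sq hcomponent
    _ = √(∑ k, ‖fderiv ℝ (fderiv ℝ (fun x => F x k)) θ‖ ^ 2) * (‖z‖ * ‖w‖) := by
        simp_rw [mul_pow _ (‖z‖ * ‖w‖), ← Finset.sum_mul]
        rw [Real.sqrt_mul (by positivity), Real.sqrt_sq (by positivity)]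

theorem hessian_positive_definite (m N : ℕ)
    (F : EuclideanSpace ℝ (Fin m) → EuclideanSpace ℂ (Fin N))
    (hF : ContDiff ℝ 2 F) (y : EuclideanSpace ℂ (Fin N))
    (θhat : EuclideanSpace ℝ (Fin m)) (σ smin : ℝ)
    (hsminpos : 0 < smin)
    (hsmin : ∀ z : EuclideanSpace ℝ (Fin m), smin * ‖z‖ ≤ ‖fderiv ℝ F θhat z‖)
    (hadm : ‖F θhat - y‖ < σ)
    (hbound : σ * Real.sqrt (∑ k : Fin N,
        ‖fderiv ℝ (fderiv ℝ (fun θ => F θ k)) θhat‖ ^ 2) ≤ smin ^ 2) :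
    ∀ z : EuclideanSpace ℝ (Fin m), z ≠ 0 →
      0 < fderiv ℝ (fderiv ℝ (fun θ => (1 / 2) * ‖F θ - y‖ ^ 2)) θhat z z := by
  intro z hz
  set S := √(∑ k : Fin N, ‖fderiv ℝ (fderiv ℝ (fun θ => F θ k)) θhat‖ ^ 2)
  rw [fderiv_fderiv_half_norm_sub_sq_apply hF.contDiffAt, real_inner_self_eq_norm_sq]
  have hgaussNewton : smin ^ 2 * ‖z‖ ^ 2 ≤ ‖fderiv ℝ F θhat z‖ ^ 2 := by
    simpa only [mul_pow] using pow_le_pow_left₀ (by positivity) (hsmin z) 2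
  have hresidualTerm : -(‖F θhat - y‖ * (S * (‖z‖ * ‖z‖))) ≤
      ⟪F θhat - y, fderiv ℝ (fderiv ℝ F) θhat z z⟫_ℝ :=
    neg_le_of_abs_le <| (abs_real_inner_le_norm _ _).trans <| mul_le_mul_of_nonneg_left
      (EuclideanSpace.norm_fderiv_fderiv_apply_le hF.contDiffAt z z) (norm_nonneg _)
  have hresidual : ‖F θhat - y‖ * S < smin ^ 2 := by
    have hS : 0 ≤ S := Real.sqrt_nonneg _
    rcases hS.eq_or_lt with hS0 | hSpos
    · rw [← hS0, mul_zero]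
      positivity
    · exact (mul_lt_mul_of_pos_right hadm hSpos).trans_le hbound
  have hz2 : 0 < ‖z‖ ^ 2 := by positivity
  nlinarith [mul_lt_mul_of_pos_right hresidual hz2]
end

section
/- Let θ_1,…,θ_n ∈ [0,1) be pairwise distinct, a_1,…,a_n and b_1,…,b_n complex numbers, and K with 2K+1 ≥ 4n. If Σ_{j=1}^n (a_j + b_j·(-2πik)) e^{-2πi θ_j k} = 0 for all integers k with |k| ≤ K, then a_j = b_j = 0 for all j; equivalently, the 2n vectors (e^{-2πiθ_j k})_k and (k e^{-2πiθ_j k})_k, j = 1,…,n, with k ranging over -K,…,K, are linearly independent. -/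
open scoped Real

open Polynomial in
lemma sum_mul_coeff_eq_deriv (Q : ℂ[X]) (N : ℕ) (h : Q.natDegree ≤ N) (z : ℂ) :
    ∑ m ∈ Finset.range (N + 1), (m : ℂ) * Q.coeff m * z ^ m
      = z * Q.derivative.eval z := by
  have hd : Q.derivative.natDegree < N + 1 :=
    Nat.lt_succ_of_le ((Q.natDegree_derivative_le).trans ((Nat.sub_le _ _).trans h))
  rw [eval_eq_sum_range' hd z, Finset.mul_sum]
  conv_lhs => rw [Finset.sum_range_succ']
  conv_rhs => rw [Finset.sum_range_succ]
  have hc : Q.coeff (N + 1) = 0 := coeff_eq_zero_of_natDegree_lt (by omega)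
  simp only [coeff_derivative, hc, Nat.cast_zero, zero_mul, mul_zero, add_zero,
    zero_add, pow_zero]
  refine Finset.sum_congr rfl fun i _ => ?_
  push_cast
  ring

open Polynomial in
lemma key_indep (n N : ℕ) (z : Fin n → ℂ) (hz : ∀ j, z j ≠ 0)
    (hinj : Function.Injective z) (α β : Fin n → ℂ) (hN : 2 * n ≤ N + 1)
    (hs : ∀ m : ℕ, m ≤ N → ∑ j, (α j + β j * m) * z j ^ m = 0) :
    ∀ j, α j = 0 ∧ β j = 0 := by
  classical
  have hT : ∀ Q : ℂ[X], Q.natDegree ≤ N →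
      ∑ j, (α j * Q.eval (z j) + β j * (z j * Q.derivative.eval (z j))) = 0 := by
    intro Q hQ
    have hterm : ∀ j, α j * Q.eval (z j) + β j * (z j * Q.derivative.eval (z j))
        = ∑ m ∈ Finset.range (N + 1), Q.coeff m * ((α j + β j * m) * z j ^ m) := by
      intro j
      rw [eval_eq_sum_range' (Nat.lt_succ_of_le hQ), ← sum_mul_coeff_eq_deriv Q N hQ,
        Finset.mul_sum, Finset.mul_sum, ← Finset.sum_add_distrib]
      exact Finset.sum_congr rfl fun m _ => by ring
    simp_rw [hterm]
    rw [Finset.sum_comm]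
    refine Finset.sum_eq_zero fun m hm => ?_
    rw [← Finset.mul_sum, hs m (Nat.lt_succ_iff.mp (Finset.mem_range.mp hm)), mul_zero]
  -- the Hermite-type polynomial attached to j
  set P : Fin n → ℂ[X] := fun j => ∏ i ∈ Finset.univ.erase j, (X - C (z i)) ^ 2 with hP
  have hdegP : ∀ j, (P j).natDegree ≤ 2 * (n - 1) := by
    intro j
    refine (natDegree_prod_le _ _).trans ?_
    have : ∀ i ∈ Finset.univ.erase j, ((X - C (z i)) ^ 2).natDegree = 2 := by
      intro i _
      rw [natDegree_pow, natDegree_X_sub_C]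
    rw [Finset.sum_congr rfl this, Finset.sum_const, Finset.card_erase_of_mem
      (Finset.mem_univ j), Finset.card_univ, Fintype.card_fin, smul_eq_mul]
    omega
  have hPj : ∀ j, (P j).eval (z j) ≠ 0 := by
    intro j
    rw [hP]
    simp only [eval_prod, eval_pow, eval_sub, eval_X, eval_C]
    refine Finset.prod_ne_zero_iff.mpr fun i hi => pow_ne_zero _ (sub_ne_zero.mpr ?_)
    intro h
    exact Finset.ne_of_mem_erase hi (hinj h).symm
  have hPi : ∀ j i, i ≠ j → (P j).eval (z i) = 0 := by
    intro j i hij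
    rw [hP]
    simp only [eval_prod, eval_pow, eval_sub, eval_X, eval_C]
    refine Finset.prod_eq_zero (Finset.mem_erase.mpr ⟨hij, Finset.mem_univ i⟩) ?_
    simp
  have hDi : ∀ j i, i ≠ j → ((P j).derivative).eval (z i) = 0 := by
    intro j i hij
    have hfac : P j = (X - C (z i)) ^ 2 *
        ∏ i' ∈ (Finset.univ.erase j).erase i, (X - C (z i')) ^ 2 :=
      (Finset.mul_prod_erase _ _ (Finset.mem_erase.mpr ⟨hij, Finset.mem_univ i⟩)).symm
    rw [hfac, derivative_mul, derivative_pow]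
    simp
  have hβ : ∀ j, β j = 0 := by
    intro j
    have hdeg1 : ((P j) * (X - C (z j))).natDegree ≤ N := by
      refine (natDegree_mul_le).trans ?_
      rw [natDegree_X_sub_C]
      have := hdegP j
      have hn : 1 ≤ n := Nat.one_le_iff_ne_zero.mpr (by rintro rfl; exact j.elim0)
      omega
    have hT1 := hT ((P j) * (X - C (z j))) hdeg1
    rw [Fintype.sum_eq_single j (fun i hi => ?_)] at hT1
    · have he1 : ((P j) * (X - C (z j))).eval (z j) = 0 := by simp
      have he2 : (((P j) * (X - C (z j))).derivative).eval (z j) = (P j).eval (z j) := by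
        rw [derivative_mul]; simp
      rw [he1, he2, mul_zero, zero_add] at hT1
      rcases mul_eq_zero.mp hT1 with h | h
      · exact h
      · rcases mul_eq_zero.mp h with h | h
        · exact absurd h (hz j)
        · exact absurd h (hPj j)
    · have e1 : ((P j) * (X - C (z j))).eval (z i) = 0 := by
        rw [eval_mul, hPi j i hi, zero_mul]
      have e2 : (((P j) * (X - C (z j))).derivative).eval (z i) = 0 := by
        simp [derivative_mul, hDi j i hi, hPi j i hi]
      rw [e1, e2]; ring
  intro j
  refine ⟨?_, hβ j⟩
  have hdeg2 : (P j).natDegree ≤ N := by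
    have := hdegP j
    have hn : 1 ≤ n := Nat.one_le_iff_ne_zero.mpr (by rintro rfl; exact j.elim0)
    omega
  have hT2 := hT (P j) hdeg2
  simp only [hβ, zero_mul, add_zero] at hT2
  rw [Fintype.sum_eq_single j (fun i hi => by rw [hPi j i hi, mul_zero])] at hT2
  rcases mul_eq_zero.mp hT2 with h | h
  · exact h
  · exact absurd h (hPj j)

theorem dirac_dipole_independence (n : ℕ) (K : ℤ) (θ : Fin n → ℝ)
    (a b : Fin n → ℂ)
    (hrange : ∀ j, θ j ∈ Set.Ico (0 : ℝ) 1)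
    (hdist : Function.Injective θ)
    (hK : (4 * n : ℤ) ≤ 2 * K + 1)
    (hrel : ∀ k : ℤ, |k| ≤ K →
      ∑ j, (a j + b j * (-(2 * π * Complex.I) * (k : ℂ))) *
        Complex.exp (-(2 * π * Complex.I) * (θ j) * (k : ℂ)) = 0) :
    ∀ j, a j = 0 ∧ b j = 0 := by
  classical
  set c : ℂ := -(2 * π * Complex.I) with hc
  have hπ : ((π : ℂ)) ≠ 0 := by exact_mod_cast Real.pi_ne_zero
  have h2π : (2 * (π : ℂ) * Complex.I) ≠ 0 :=
    mul_ne_zero (mul_ne_zero two_ne_zero hπ) Complex.I_ne_zero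
  have hcne : c ≠ 0 := by rw [hc]; exact neg_ne_zero.mpr h2π
  set z : Fin n → ℂ := fun j => Complex.exp (c * θ j) with hzdef
  have hz : ∀ j, z j ≠ 0 := fun j => Complex.exp_ne_zero _
  have hzinj : Function.Injective z := by
    intro i j h
    rw [hzdef] at h
    simp only [Complex.exp_eq_exp_iff_exists_int] at h
    obtain ⟨m, hm⟩ := h
    have h2 : ((θ j : ℂ) - θ i - m) * (2 * π * Complex.I) = 0 := by
      rw [hc] at hm; linear_combination hm
    have h3 : ((θ j : ℂ)) - θ i - m = 0 := by
      rcases mul_eq_zero.mp h2 with h | h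
      · exact h
      · exact absurd h h2π
    have h4 : (θ j : ℝ) - θ i - m = 0 := by exact_mod_cast h3
    have hri := hrange i
    have hrj := hrange j
    simp only [Set.mem_Ico] at hri hrj
    have hm0 : m = 0 := by
      have h5 : (m : ℝ) = θ j - θ i := by linarith
      have : |(m : ℝ)| < 1 := by rw [h5, abs_sub_lt_iff]; constructor <;> linarith
      exact_mod_cast by
        have := (abs_lt.mp this)
        have h6 : (-1 : ℝ) < (m : ℝ) := this.1
        have h7 : (m : ℝ) < 1 := this.2
        have : (-1 : ℤ) < m ∧ m < 1 := ⟨by exact_mod_cast h6, by exact_mod_cast h7⟩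
        omega
    apply hdist
    rw [hm0] at h4
    push_cast at h4
    linarith
  have hK0 : 0 ≤ K := by omega
  set N : ℕ := (2 * K).toNat with hNdef
  set α : Fin n → ℂ := fun j => (a j - b j * c * K) * z j ^ (-K : ℤ) with hα
  set β : Fin n → ℂ := fun j => (b j * c) * z j ^ (-K : ℤ) with hβ
  have hs : ∀ m : ℕ, m ≤ N → ∑ j, (α j + β j * m) * z j ^ m = 0 := by
    intro m hm
    have hmK : (m : ℤ) ≤ 2 * K := by omega
    have habs : |(m : ℤ) - K| ≤ K := abs_le.mpr ⟨by omega, by omega⟩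
    have h0 := hrel ((m : ℤ) - K) habs
    rw [← h0]
    refine Finset.sum_congr rfl fun j _ => ?_
    have hexp : Complex.exp (c * (θ j) * (((m : ℤ) - K : ℤ) : ℂ))
        = z j ^ ((m : ℤ) - K) := by
      rw [show c * (θ j : ℂ) * (((m : ℤ) - K : ℤ) : ℂ)
          = (((m : ℤ) - K : ℤ) : ℂ) * (c * θ j) by ring, Complex.exp_int_mul]
    rw [hexp, show ((m : ℤ) - K) = (m : ℤ) + (-K) by ring, zpow_add₀ (hz j),
      zpow_natCast]
    simp only [hα, hβ]
    push_cast
    ring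
  have hN2 : 2 * n ≤ N + 1 := by omega
  have hkey := key_indep n N z hz hzinj α β hN2 hs
  intro j
  obtain ⟨h1, h2⟩ := hkey j
  have hzK : z j ^ (-K : ℤ) ≠ 0 := zpow_ne_zero _ (hz j)
  have hb : b j = 0 := by
    rcases mul_eq_zero.mp h2 with h | h
    · rcases mul_eq_zero.mp h with h | h
      · exact h
      · exact absurd h hcne
    · exact absurd h hzK
  refine ⟨?_, hb⟩
  rcases mul_eq_zero.mp h1 with h | h
  · rw [hb] at h
    simpa using h
  · exact absurd h hzK
end

section
/- Fix σ, σ' > 0 and β, β' ∈ [0,1) with (σ, β) ≠ (σ', β'), and K ≥ 2. Define vectors u, u' ∈ ℂ^{2K+1} by u_k = σ e^{-2πi β k} e^{-2π² σ² k²} and u'_k = σ' e^{-2πi β' k} e^{-2π² σ'² k²} for k = -K,…,K. Then u and u' are linearly independent over ℂ. -/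
/-! The samples at the two frequencies `0` and `1` already suffice: `u₀ = σ` and
`u₁ = σ q(σ, β)` with `q(σ, β) = e^{-2πiβ} e^{-2π²σ²}`. The modulus of `q` determines `σ > 0` and
its phase determines `β ∈ [0, 1)`, so the `2 × 2` minor `σ σ' (q' - q)` does not vanish. -/

open scoped Real

open Complex

theorem eq_zero_and_eq_zero_of_ratio_ne {F : Type*} [Field F] {a a' r r' c d : F}
    (ha : a ≠ 0) (ha' : a' ≠ 0) (hr : r ≠ r')
    (h₀ : c * a + d * a' = 0) (h₁ : c * (a * r) + d * (a' * r') = 0) : c = 0 ∧ d = 0 := by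
  have hca : c * a * (r - r') = 0 := by linear_combination h₁ - r' * h₀
  have hc : c = 0 := by simpa [ha, sub_eq_zero, hr] using hca
  subst hc
  simpa [ha'] using h₀

noncomputable def gaussianSample (σ β : ℝ) (x : ℂ) : ℂ :=
  σ * exp (-(2 * π * I) * β * x) * exp (-(2 * π ^ 2 * σ ^ 2 : ℝ) * x ^ 2)

noncomputable def gaussianRatio (σ β : ℝ) : ℂ :=
  exp (-(2 * π * I) * β) * exp (-(2 * π ^ 2 * σ ^ 2 : ℝ))

@[simp]
theorem gaussianSample_zero (σ β : ℝ) : gaussianSample σ β 0 = σ := by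
  simp [gaussianSample]

theorem gaussianSample_one (σ β : ℝ) : gaussianSample σ β 1 = σ * gaussianRatio σ β := by
  simp [gaussianSample, gaussianRatio, mul_assoc]

theorem norm_gaussianRatio (σ β : ℝ) : ‖gaussianRatio σ β‖ = Real.exp (-(2 * π ^ 2 * σ ^ 2)) := by
  simp [gaussianRatio, norm_exp, -ofReal_pow]

theorem eq_of_exp_neg_two_pi_I_mul_eq {β β' : ℝ} (hβ : β ∈ Set.Ico (0 : ℝ) 1)
    (hβ' : β' ∈ Set.Ico (0 : ℝ) 1) (h : exp (-(2 * π * I) * β) = exp (-(2 * π * I) * β')) :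
    β = β' := by
  obtain ⟨n, hn⟩ := exp_eq_exp_iff_exists_int.mp h
  have hβn : β' - β = n := by
    have h2πI : 2 * (π : ℂ) * I ≠ 0 := by simp [Real.pi_ne_zero, I_ne_zero]
    have h : 2 * (π : ℂ) * I * (β' - β) = 2 * π * I * n := by linear_combination hn
    exact_mod_cast mul_left_cancel₀ h2πI h
  rw [← Int.fract_eq_self.mpr hβ, ← Int.fract_eq_self.mpr hβ']
  exact Int.fract_eq_fract.mpr ⟨-n, by push_cast; linarith⟩

theorem eq_and_eq_of_gaussianRatio_eq {σ σ' β β' : ℝ} (hσ : 0 < σ) (hσ' : 0 < σ')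
    (hβ : β ∈ Set.Ico (0 : ℝ) 1) (hβ' : β' ∈ Set.Ico (0 : ℝ) 1)
    (h : gaussianRatio σ β = gaussianRatio σ' β') : σ = σ' ∧ β = β' := by
  have hσσ' : σ = σ' := by
    have hnorm := congrArg norm h
    rw [norm_gaussianRatio, norm_gaussianRatio, Real.exp_eq_exp] at hnorm
    have hsq : 2 * π ^ 2 * σ ^ 2 = 2 * π ^ 2 * σ' ^ 2 := neg_injective hnorm
    exact (sq_eq_sq₀ hσ.le hσ'.le).mp (mul_left_cancel₀ (by positivity) hsq)
  subst hσσ'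
  exact ⟨rfl, eq_of_exp_neg_two_pi_I_mul_eq hβ hβ' (mul_right_cancel₀ (exp_ne_zero _) h)⟩

theorem gaussian_samples_independent (K : ℕ) (hK : 2 ≤ K)
    (σ σ' : ℝ) (hσ : 0 < σ) (hσ' : 0 < σ')
    (β β' : ℝ) (hβ : β ∈ Set.Ico (0 : ℝ) 1) (hβ' : β' ∈ Set.Ico (0 : ℝ) 1)
    (hne : (σ, β) ≠ (σ', β')) :
    ∀ c d : ℂ,
      (∀ k : Fin (2 * K + 1),
        c * ((σ : ℂ) * Complex.exp (-(2 * π * Complex.I) * β * (((k : ℕ) : ℂ) - (K : ℂ))) *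
              Complex.exp (-(2 * π ^ 2 * σ ^ 2 : ℝ) * (((k : ℕ) : ℂ) - (K : ℂ)) ^ 2)) +
        d * ((σ' : ℂ) * Complex.exp (-(2 * π * Complex.I) * β' * (((k : ℕ) : ℂ) - (K : ℂ))) *
              Complex.exp (-(2 * π ^ 2 * σ' ^ 2 : ℝ) * (((k : ℕ) : ℂ) - (K : ℂ)) ^ 2)) = 0) →
      c = 0 ∧ d = 0 := by
  intro c d h
  change ∀ k : Fin (2 * K + 1), c * gaussianSample σ β ((k : ℕ) - K) +
    d * gaussianSample σ' β' ((k : ℕ) - K) = 0 at h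
  have h₀ := h ⟨K, by omega⟩
  have h₁ := h ⟨K + 1, by omega⟩
  simp only [sub_self, Nat.cast_add, Nat.cast_one, add_sub_cancel_left, gaussianSample_zero,
    gaussianSample_one] at h₀ h₁
  refine eq_zero_and_eq_zero_of_ratio_ne (by exact_mod_cast hσ.ne') (by exact_mod_cast hσ'.ne')
    (fun hr => hne ?_) h₀ h₁
  obtain ⟨rfl, rfl⟩ := eq_and_eq_of_gaussianRatio_eq hσ hσ' hβ hβ' hr
  rfl
end
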